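/- arXiv:2106.08343 — 2 statements merged into one kernel-verified Lean document; each statement's English description precedes it below -/
import Mathlib

section
/- In the chain complex of the previous context, define the projector p = Π (orthogonal projection onto harmonic forms) in each degree, the inclusion ι of harmonic forms, and homotopies h_i = −(Δ')^{-1}d† for i ≥ 0, h_{−1} = −(Δ')^{-1}(1−Π), and h_i = −(Δ')^{-1}d for i ≤ −2, where Δ' is the restriction of Δ to the orthogonal complement of harmonic forms, which is invertible there. Then the homotopy relation ι∘p − 1 = ∂∘h + h∘∂ holds in every degree. -/
/-- In the chain complex `X_i = Ω^{r-i}` (with `∂ = d` for `i ≥ 1`,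
`∂_0 = d†d`, `∂ = d†` for `i ≤ -1`), take `p = Π` (projection onto harmonic forms),
`ι` the inclusion of harmonic forms, and the homotopies `h_i = -(Δ')⁻¹ d†` for `i ≥ 0`,
`h_{-1} = -(Δ')⁻¹ (1 - Π)`, `h_i = -(Δ')⁻¹ d` for `i ≤ -2`, where `G = (Δ')⁻¹` is the
inverse of the Laplacian on the complement of harmonic forms, commuting with `d` and `d†`
and satisfying `G ∘ Δ = 1 - Π`.  Then the homotopy relation `ι∘p - 1 = ∂∘h + h∘∂` holds
in every degree: generically on the left (`d`) region, at the two border degrees `X_0` and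
`X_{-1}` (middle form degree written as `s+1`), and generically on the right (`d†`) region. -/
theorem harmonic_homotopy_transfer_relations
    {k : Type*} [Field k] (Ω : ℤ → Type*)
    [∀ p, AddCommGroup (Ω p)] [∀ p, Module k (Ω p)]
    (d : ∀ p, Ω p →ₗ[k] Ω (p+1)) (δ : ∀ p, Ω (p+1) →ₗ[k] Ω p)
    (Pr : ∀ p, Ω p →ₗ[k] Ω p)        -- harmonic projection Π in each form degree
    (G : ∀ p, Ω p →ₗ[k] Ω p)         -- (Δ')⁻¹ in each form degree
    (hd : ∀ p, d (p+1) ∘ₗ d p = 0)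
    (hδ : ∀ p, δ p ∘ₗ δ (p+1) = 0)
    (hPr2 : ∀ p, Pr p ∘ₗ Pr p = Pr p)
    (hPrδ : ∀ p, Pr p ∘ₗ δ p = 0)          -- Π kills coexact forms
    (hPrd : ∀ p, Pr (p+1) ∘ₗ d p = 0)      -- Π kills exact forms
    (hGd : ∀ p, d p ∘ₗ G p = G (p+1) ∘ₗ d p)       -- (Δ')⁻¹ commutes with d
    (hGδ : ∀ p, δ p ∘ₗ G (p+1) = G p ∘ₗ δ p)       -- (Δ')⁻¹ commutes with d†
    (hGΔ : ∀ p, G (p+1) ∘ₗ (δ (p+1) ∘ₗ d (p+1) + d p ∘ₗ δ p)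
        = LinearMap.id - Pr (p+1)) :              -- (Δ')⁻¹ Δ = 1 - Π
    -- generic relation in the left region (degrees i ≥ 1, form degree p+1):
    (∀ p, d p ∘ₗ (-(G p ∘ₗ δ p)) + (-(G (p+1) ∘ₗ δ (p+1))) ∘ₗ d (p+1)
        = Pr (p+1) - LinearMap.id) ∧
    -- relation at degree 0 (form degree s+1):
    (∀ s, d s ∘ₗ (-(G s ∘ₗ δ s))
        + (-(G (s+1) ∘ₗ (LinearMap.id - Pr (s+1)))) ∘ₗ (δ (s+1) ∘ₗ d (s+1))
        = Pr (s+1) - LinearMap.id) ∧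
    -- relation at degree -1 (form degree s+1):
    (∀ s, (δ (s+1) ∘ₗ d (s+1)) ∘ₗ (-(G (s+1) ∘ₗ (LinearMap.id - Pr (s+1))))
        + (-(G (s+1) ∘ₗ d s)) ∘ₗ δ s
        = Pr (s+1) - LinearMap.id) ∧
    -- generic relation in the right region (degrees i ≤ -2, form degree q+1):
    (∀ q, δ (q+1) ∘ₗ (-(G (q+1+1) ∘ₗ d (q+1))) + (-(G (q+1) ∘ₗ d q)) ∘ₗ δ q
        = Pr (q+1) - LinearMap.id) := by
  -- pointwise versions of the hypotheses
  have hGd' : ∀ p (y : Ω p), d p (G p y) = G (p+1) (d p y) := fun p y =>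
    LinearMap.congr_fun (hGd p) y
  have hGδ' : ∀ p (y : Ω (p+1)), δ p (G (p+1) y) = G p (δ p y) := fun p y =>
    LinearMap.congr_fun (hGδ p) y
  have hGΔ' : ∀ p (x : Ω (p+1)),
      G (p+1) (δ (p+1) (d (p+1) x)) + G (p+1) (d p (δ p x)) = x - Pr (p+1) x := by
    intro p x
    have h := LinearMap.congr_fun (hGΔ p) x
    simpa [LinearMap.comp_apply, LinearMap.add_apply, LinearMap.sub_apply,
      LinearMap.id_apply, map_add] using h
  -- key identity:  d ∘ G ∘ δ ∘ d = d
  have key : ∀ q (x : Ω q), d q (G q (δ q (d q x))) = d q x := by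
    intro q x
    have h1 := hGΔ' q (d q x)
    have h2 : d (q+1) (d q x) = 0 := by
      simpa [LinearMap.comp_apply] using LinearMap.congr_fun (hd q) x
    have h3 : Pr (q+1) (d q x) = 0 := by
      simpa [LinearMap.comp_apply] using LinearMap.congr_fun (hPrd q) x
    rw [h2, h3] at h1
    simp only [map_zero, zero_add, sub_zero] at h1
    rw [hGd' q (δ q (d q x))]
    exact h1
  -- consequence:  d ∘ Π = 0
  have hdPr : ∀ s (x : Ω (s+1)), d (s+1) (Pr (s+1) x) = 0 := by
    intro s x
    have e2 := hGΔ' s x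
    have hPrx : Pr (s+1) x
        = x - (G (s+1) (δ (s+1) (d (s+1) x)) + G (s+1) (d s (δ s x))) := by
      rw [e2]; abel
    have hdd : d (s+1) (d s (δ s x)) = 0 := by
      simpa [LinearMap.comp_apply] using LinearMap.congr_fun (hd s) (δ s x)
    rw [hPrx, map_sub, map_add, key (s+1) x, hGd' (s+1) (d s (δ s x)), hdd, map_zero]
    abel
  refine ⟨?_, ?_, ?_, ?_⟩
  · intro p
    ext x
    simp only [LinearMap.add_apply, LinearMap.comp_apply, LinearMap.neg_apply,
      LinearMap.sub_apply, LinearMap.id_apply, map_neg]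
    rw [hGd' p (δ p x)]
    have e2 := hGΔ' p x
    rw [← neg_sub x (Pr (p+1) x), ← e2]
    abel
  · intro s
    ext x
    have hPrδ' : Pr (s+1) (δ (s+1) (d (s+1) x)) = 0 := by
      simpa [LinearMap.comp_apply] using LinearMap.congr_fun (hPrδ (s+1)) (d (s+1) x)
    simp only [LinearMap.add_apply, LinearMap.comp_apply, LinearMap.neg_apply,
      LinearMap.sub_apply, LinearMap.id_apply, map_neg, map_sub, hPrδ', map_zero,
      sub_zero]
    rw [hGd' s (δ s x)]
    have e2 := hGΔ' s x
    rw [← neg_sub x (Pr (s+1) x), ← e2]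
    abel
  · intro s
    ext x
    simp only [LinearMap.add_apply, LinearMap.comp_apply, LinearMap.neg_apply,
      LinearMap.sub_apply, LinearMap.id_apply, map_neg, map_sub]
    rw [hGd' (s+1) x, hGd' (s+1) (Pr (s+1) x), hdPr s x, map_zero, map_zero,
      hGδ' (s+1) (d (s+1) x)]
    have e2 := hGΔ' s x
    rw [← neg_sub x (Pr (s+1) x), ← e2]
    abel
  · intro q
    ext x
    simp only [LinearMap.add_apply, LinearMap.comp_apply, LinearMap.neg_apply,
      LinearMap.sub_apply, LinearMap.id_apply, map_neg]
    rw [hGδ' (q+1) (d (q+1) x)]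
    have e2 := hGΔ' q x
    rw [← neg_sub x (Pr (q+1) x), ← e2]
    abel
end

section
/- In the setting of the Siegel-gauge homotopy G = b₀⁺(L₀⁺)^{-1}(1−Π): if P is a projector commuting with G, Π, and Q, then h := −G(1−P) satisfies the homotopy relation P̂ = 1 + hQ + Qh for P̂ = P + (1−P)Π, together with the side conditions h² = 0, hP̂ = 0, and P̂h = 0. -/
/-- Siegel-gauge homotopy transfer.  With `G = b₀⁺(L₀⁺)⁻¹(1−Π)` satisfying
`GQ + QG = 1 − Π`, `G² = 0`, `GΠ = ΠG = 0`, and `P` a projector commuting with `G`, `Π`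
and `Q`, the map `h := −G(1−P)` satisfies the homotopy relation `P̂ = 1 + hQ + Qh` for
`P̂ = P + (1−P)Π`, together with the side conditions `h² = 0`, `hP̂ = 0` and `P̂h = 0`. -/
theorem siegel_gauge_homotopy_transfer
    {X : Type*} [AddCommGroup X] [Module ℂ X]
    (Q b0 Pr P Linv G : Module.End ℂ X)
    (hQ : Q * Q = 0) (hb0 : b0 * b0 = 0)
    (hPr2 : Pr * Pr = Pr) (hPrQ : Pr * Q = Q * Pr) (hPrb : Pr * b0 = b0 * Pr)
    (hGdef : G = b0 * Linv * (1 - Pr))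
    (hGQ : G * Q + Q * G = 1 - Pr)
    (hGG : G * G = 0)
    (hGPr : G * Pr = 0) (hPrG : Pr * G = 0)
    (hP2 : P * P = P)
    (hPG : P * G = G * P) (hPPr : P * Pr = Pr * P) (hPQ : P * Q = Q * P) :
    (P + (1 - P) * Pr) = 1 + (-(G * (1 - P))) * Q + Q * (-(G * (1 - P))) ∧
    (-(G * (1 - P))) * (-(G * (1 - P))) = 0 ∧
    (-(G * (1 - P))) * (P + (1 - P) * Pr) = 0 ∧
    (P + (1 - P) * Pr) * (-(G * (1 - P))) = 0 := by
  have hc : (1 - P) * Q = Q * (1 - P) := by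
    rw [sub_mul, mul_sub, hPQ, one_mul, mul_one]
  have hcG : (1 - P) * G = G * (1 - P) := by
    rw [sub_mul, mul_sub, hPG, one_mul, mul_one]
  have h3 : P * (1 - P) = 0 := by rw [mul_sub, mul_one, hP2, sub_self]
  have h3' : (1 - P) * P = 0 := by rw [sub_mul, one_mul, hP2, sub_self]
  have hidem : (1 - P) * (1 - P) = 1 - P := by
    have e : (1 - P) * (1 - P) = 1 - P - (1 - P) * P := by noncomm_ring
    rw [e, h3', sub_zero]
  refine ⟨?_, ?_, ?_, ?_⟩
  · have key : -(G * (1 - P)) * Q + Q * -(G * (1 - P)) = -((1 - Pr) * (1 - P)) := by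
      rw [neg_mul, mul_neg, ← neg_add, mul_assoc, hc, ← mul_assoc, ← mul_assoc,
        ← add_mul, hGQ]
    rw [add_assoc, key]
    have e2 : 1 + -((1 - Pr) * (1 - P)) = P + (Pr - Pr * P) := by noncomm_ring
    rw [e2, ← hPPr]
    noncomm_ring
  · have e : -(G * (1 - P)) * -(G * (1 - P)) = G * ((1 - P) * G) * (1 - P) := by
      noncomm_ring
    rw [e, hcG, ← mul_assoc, hGG, zero_mul, zero_mul]
  · have e : -(G * (1 - P)) * (P + (1 - P) * Pr) =
        -(G * ((1 - P) * P) + G * ((1 - P) * (1 - P)) * Pr) := by noncomm_ring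
    rw [e, h3', hidem, mul_zero, ← hcG, mul_assoc, hGPr, mul_zero, zero_add, neg_zero]
  · have e : (P + (1 - P) * Pr) * -(G * (1 - P)) =
        -(P * G * (1 - P) + (1 - P) * (Pr * G) * (1 - P)) := by noncomm_ring
    rw [e, hPrG, hPG, mul_assoc, h3, mul_zero, mul_zero, zero_mul, add_zero, neg_zero]
end
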